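/- arXiv:2404.05053 — 6 statements merged into one kernel-verified Lean document; each statement's English description precedes it below -/
import Mathlib

section
/- Let M = ![![0,0,1,0],![1,0,0,0],![0,0,1/2,1/2],![0,1,0,0]], P i j = M j i, and let p = q be the uniform distribution on Fin 4 (value 1/4 everywhere). Then (p, q) is a Nash equilibrium: for every mixed strategy p' (nonnegative, summing to 1), ∑ i j, p' i * M i j * q j ≤ ∑ i j, p i * M i j * q j = 1/4, and symmetrically for the Physician with P. Moreover both players' equilibrium payoffs equal 1/4. -/
theorem stmt_6
    (M P : Fin 4 → Fin 4 → ℚ)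
    (hM : M = ![![0,0,1,0],![1,0,0,0],![0,0,1/2,1/2],![0,1,0,0]])
    (hP : ∀ i j, P i j = M j i)
    (p q : Fin 4 → ℚ) (hp : ∀ i, p i = 1/4) (hq : ∀ j, q j = 1/4) :
    (∀ p' : Fin 4 → ℚ, (∀ i, 0 ≤ p' i) → (∑ i : Fin 4, p' i) = 1 →
      ∑ i : Fin 4, ∑ j : Fin 4, p' i * M i j * q j ≤
        ∑ i : Fin 4, ∑ j : Fin 4, p i * M i j * q j) ∧
    (∀ q' : Fin 4 → ℚ, (∀ j, 0 ≤ q' j) → (∑ j : Fin 4, q' j) = 1 →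
      ∑ i : Fin 4, ∑ j : Fin 4, p i * P i j * q' j ≤
        ∑ i : Fin 4, ∑ j : Fin 4, p i * P i j * q j) ∧
    (∑ i : Fin 4, ∑ j : Fin 4, p i * M i j * q j = 1/4) ∧
    (∑ i : Fin 4, ∑ j : Fin 4, p i * P i j * q j = 1/4) := by
  subst hM
  have hs : ∀ f : Fin 4 → ℚ, (∑ i : Fin 4, f i) = f 0 + f 1 + f 2 + f 3 := fun f => by
    simp [Fin.sum_univ_four]
  refine ⟨?_, ?_, ?_, ?_⟩
  · intro p' _ hsum
    simp only [hs, hp, hq, hP, Matrix.cons_val_zero, Matrix.cons_val_one, Matrix.head_cons,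
      Matrix.cons_val_two, Matrix.tail_cons, Matrix.cons_val_three] at hsum ⊢
    linarith
  · intro q' _ hsum
    simp only [hs, hp, hq, hP, Matrix.cons_val_zero, Matrix.cons_val_one, Matrix.head_cons,
      Matrix.cons_val_two, Matrix.tail_cons, Matrix.cons_val_three] at hsum ⊢
    linarith
  · simp only [hs, hp, hq, hP, Matrix.cons_val_zero, Matrix.cons_val_one, Matrix.head_cons,
      Matrix.cons_val_two, Matrix.tail_cons, Matrix.cons_val_three]
    norm_num
  · simp only [hs, hp, hq, hP, Matrix.cons_val_zero, Matrix.cons_val_one, Matrix.head_cons,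
      Matrix.cons_val_two, Matrix.tail_cons, Matrix.cons_val_three]
    norm_num
end

section
/- Let M = ![![0,0,1,0],![1,0,0,0],![0,0,1/2,1/2],![0,1,0,0]] and P i j = M j i. Let p = ![0, 1/2, 1/2, 0] (Magician plays B and C each with probability 1/2) and q = ![1/3, 0, 0, 2/3] (Physician plays A with probability 1/3 and D with probability 2/3). Then (p,q) is a Nash equilibrium, the Magician's expected payoff is 1/3, and the Physician's expected payoff is 1/2. -/
theorem stmt_7
    (M P : Fin 4 → Fin 4 → ℚ)
    (hM : M = ![![0,0,1,0],![1,0,0,0],![0,0,1/2,1/2],![0,1,0,0]])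
    (hP : ∀ i j, P i j = M j i)
    (p q : Fin 4 → ℚ)
    (hp : p = ![0, 1/2, 1/2, 0]) (hq : q = ![1/3, 0, 0, 2/3]) :
    (∀ p' : Fin 4 → ℚ, (∀ i, 0 ≤ p' i) → (∑ i : Fin 4, p' i) = 1 →
      ∑ i : Fin 4, ∑ j : Fin 4, p' i * M i j * q j ≤
        ∑ i : Fin 4, ∑ j : Fin 4, p i * M i j * q j) ∧
    (∀ q' : Fin 4 → ℚ, (∀ j, 0 ≤ q' j) → (∑ j : Fin 4, q' j) = 1 →
      ∑ i : Fin 4, ∑ j : Fin 4, p i * P i j * q' j ≤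
        ∑ i : Fin 4, ∑ j : Fin 4, p i * P i j * q j) ∧
    (∑ i : Fin 4, ∑ j : Fin 4, p i * M i j * q j = 1/3) ∧
    (∑ i : Fin 4, ∑ j : Fin 4, p i * P i j * q j = 1/2) := by
  subst hM hp hq
  simp only [hP]
  refine ⟨?_, ?_, ?_, ?_⟩
  · intro p' hpos hsum
    have h0 := hpos 0; have h1 := hpos 1; have h2 := hpos 2; have h3 := hpos 3
    simp only [Fin.sum_univ_four] at hsum ⊢
    simp only [Matrix.cons_val_zero, Matrix.cons_val_one, Matrix.head_cons,
      Matrix.cons_val_two, Matrix.tail_cons, Matrix.cons_val_three]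
    linarith
  · intro q' hpos hsum
    have h0 := hpos 0; have h1 := hpos 1; have h2 := hpos 2; have h3 := hpos 3
    simp only [Fin.sum_univ_four] at hsum ⊢
    simp only [Matrix.cons_val_zero, Matrix.cons_val_one, Matrix.head_cons,
      Matrix.cons_val_two, Matrix.tail_cons, Matrix.cons_val_three]
    linarith
  · simp [Fin.sum_univ_four]; norm_num
  · simp [Fin.sum_univ_four]; norm_num
end

section
/- Let M = ![![0,0,1,0],![1,0,0,0],![0,0,1/2,1/2],![0,1,0,0]] and let p = ![0, 1/4, 1/2, 1/4]. Then for every column j : Fin 4, ∑ i, p i * M i j ≥ 1/4. That is, the mixed strategy (B,C,D with probabilities 1/4, 1/2, 1/4) guarantees the Magician an expected payoff of at least 1/4 against every pure (hence every mixed) opponent strategy. -/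
theorem stmt_8
    (M : Fin 4 → Fin 4 → ℚ)
    (hM : M = ![![0,0,1,0],![1,0,0,0],![0,0,1/2,1/2],![0,1,0,0]])
    (p : Fin 4 → ℚ) (hp : p = ![0, 1/4, 1/2, 1/4]) :
    ∀ j : Fin 4, 1/4 ≤ ∑ i : Fin 4, p i * M i j := by
  -- `p` is an equalizing strategy: every column pays exactly `1/4`.
  have equalizing : ∀ j : Fin 4, ∑ i : Fin 4, p i * M i j = 1/4 := by
    subst hM hp
    intro j
    fin_cases j <;> simp [Fin.sum_univ_four] <;> norm_num
  exact fun j => (equalizing j).ge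
end

section
/- Let M = ![![0,0,1,0],![1,0,0,0],![0,0,1/2,1/2],![0,1,0,0]]. For every mixed strategy p : Fin 4 → ℚ (nonnegative, summing to 1) there exists a column j : Fin 4 with ∑ i, p i * M i j ≤ 1/4. Hence no strategy of the Magician guarantees an expected payoff strictly greater than 1/4. -/
theorem stmt_9
    (M : Fin 4 → Fin 4 → ℚ)
    (hM : M = ![![0,0,1,0],![1,0,0,0],![0,0,1/2,1/2],![0,1,0,0]]) :
    ∀ p : Fin 4 → ℚ, (∀ i, 0 ≤ p i) → (∑ i : Fin 4, p i) = 1 →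
      ∃ j : Fin 4, ∑ i : Fin 4, p i * M i j ≤ 1/4 := by
  intro p hp hs
  subst hM
  by_contra h
  push_neg at h
  have h0 := h 0
  have h1 := h 1
  have h2 := h 2
  have h3 := h 3
  simp [Fin.sum_univ_four, Matrix.vecHead, Matrix.vecTail] at h0 h1 h2 h3 hs
  linarith
end

section
/- Let M = ![![0,0,1,0],![1,0,0,0],![0,0,1/2,1/2],![0,1,0,0]] and P i j = M j i. For the Nash equilibrium p = ![0,1/2,1/2,0], q = ![1/3,0,0,2/3]: every pure strategy in the support of p (rows B and C) achieves the Magician's equilibrium payoff 1/3 against q, i.e., ∑ j, M 1 j * q j = 1/3 and ∑ j, M 2 j * q j = 1/3, while rows A and D achieve at most 1/3; and every pure strategy in the support of q (columns A and D) achieves the Physician's equilibrium payoff 1/2 against p, i.e., ∑ i, p i * P i 0 = 1/2 and ∑ i, p i * P i 3 = 1/2, while columns B and C achieve at most 1/2. -/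
theorem stmt_18
    (M P : Fin 4 → Fin 4 → ℚ)
    (hM : M = ![![0,0,1,0],![1,0,0,0],![0,0,1/2,1/2],![0,1,0,0]])
    (hP : ∀ i j, P i j = M j i)
    (p q : Fin 4 → ℚ)
    (hp : p = ![0, 1/2, 1/2, 0]) (hq : q = ![1/3, 0, 0, 2/3]) :
    (∑ j : Fin 4, M 1 j * q j = 1/3) ∧
    (∑ j : Fin 4, M 2 j * q j = 1/3) ∧
    (∑ j : Fin 4, M 0 j * q j ≤ 1/3) ∧
    (∑ j : Fin 4, M 3 j * q j ≤ 1/3) ∧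
    (∑ i : Fin 4, p i * P i 0 = 1/2) ∧
    (∑ i : Fin 4, p i * P i 3 = 1/2) ∧
    (∑ i : Fin 4, p i * P i 1 ≤ 1/2) ∧
    (∑ i : Fin 4, p i * P i 2 ≤ 1/2) := by
  have magicianPayoffs : (fun i => ∑ j, M i j * q j) = ![0, 1/3, 1/3, 0] := by
    subst hM hq
    ext i
    fin_cases i <;> norm_num [Fin.sum_univ_four, Matrix.cons_val_two, Matrix.cons_val_three]
  have physicianPayoffs : (fun j => ∑ i, p i * P i j) = ![1/2, 0, 1/4, 1/2] := by
    subst hM hp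
    ext j
    fin_cases j <;> norm_num [hP, Fin.sum_univ_four, Matrix.cons_val_two, Matrix.cons_val_three]
  simp only [funext_iff] at magicianPayoffs physicianPayoffs
  norm_num [magicianPayoffs, physicianPayoffs, Matrix.cons_val_two, Matrix.cons_val_three]
end

section
/- Let M = ![![0,0,1,0],![1,0,0,0],![0,0,1/2,1/2],![0,1,0,0]]. There is no mixed strategy p : Fin 4 → ℚ (nonnegative, summing to 1) such that ∑ i, p i * M i j > 1/4 for all j : Fin 4, but p = ![0,1/4,1/2,1/4] satisfies ∑ i, p i * M i j = 1/4 for all j. Hence the maximin value sup_p min_j ∑ i, p i * M i j equals 1/4 and is attained. -/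
/-! Every row of `M` sums to `1`, so for any `p` with `∑ p = 1` the four column payoffs average
to `1/4`: some column pays at most `1/4` (the uniform mixture of columns is an optimal reply).
The strategy `![0, 1/4, 1/2, 1/4]` equalizes all four columns at `1/4`. -/

theorem sum_sum_mul_eq_sum_of_row_sums_eq_one {R ι κ : Type*} [CommSemiring R] [Fintype ι]
    [Fintype κ] {M : ι → κ → R} (hM : ∀ i, ∑ j, M i j = 1) (p : ι → R) :
    ∑ j, ∑ i, p i * M i j = ∑ i, p i := by
  rw [Finset.sum_comm]
  simp_rw [← Finset.mul_sum, hM, mul_one]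

theorem exists_payoff_le_one_div_card_of_row_sums_eq_one {R ι κ : Type*} [Field R] [LinearOrder R]
    [IsStrictOrderedRing R] [Fintype ι] [Fintype κ] [Nonempty κ] {M : ι → κ → R}
    (hM : ∀ i, ∑ j, M i j = 1) {p : ι → R} (hp : ∑ i, p i = 1) :
    ∃ j, ∑ i, p i * M i j ≤ 1 / Fintype.card κ := by
  by_contra! h
  have hlt := Finset.sum_lt_sum_of_nonempty Finset.univ_nonempty fun j _ => h j
  rw [sum_sum_mul_eq_sum_of_row_sums_eq_one hM, hp, Finset.sum_const, Finset.card_univ,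
    nsmul_eq_mul, mul_one_div_cancel (by positivity)] at hlt
  exact lt_irrefl _ hlt

theorem stmt_19
    (M : Fin 4 → Fin 4 → ℚ)
    (hM : M = ![![0,0,1,0],![1,0,0,0],![0,0,1/2,1/2],![0,1,0,0]]) :
    (¬ ∃ p : Fin 4 → ℚ, (∀ i, 0 ≤ p i) ∧ (∑ i : Fin 4, p i) = 1 ∧
        ∀ j : Fin 4, 1/4 < ∑ i : Fin 4, p i * M i j) ∧
    (∀ j : Fin 4, ∑ i : Fin 4, (![0, 1/4, 1/2, 1/4] : Fin 4 → ℚ) i * M i j = 1/4) := by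
  have hrows : ∀ i, ∑ j, M i j = 1 := by
    subst hM
    intro i
    fin_cases i <;> norm_num [Fin.sum_univ_four, Matrix.cons_val_two, Matrix.cons_val_three]
  refine ⟨fun ⟨p, _, hsum, hgt⟩ => ?_, fun j => ?_⟩
  · obtain ⟨j, hj⟩ := exists_payoff_le_one_div_card_of_row_sums_eq_one hrows hsum
    rw [Fintype.card_fin] at hj
    exact (hgt j).not_ge (by exact_mod_cast hj)
  · subst hM
    fin_cases j <;> norm_num [Fin.sum_univ_four, Matrix.cons_val_two, Matrix.cons_val_three]
end
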